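/- arXiv:1806.01342 — 3 statements merged into one kernel-verified Lean document; each statement's English description precedes it below -/
import Mathlib

section
/- Let P be a positive integer and for each p ∈ {1,...,P} let n_p > k_p ≥ 1 be integers, with k = k_1 + ... + k_P and n = n_1 + ... + n_P. Then the asymptotic Protocol-B rate R_B = ( Σ_p (k_p/k) · (n_p/(n_p - k_p)) )^{-1} is at most (n-k)/n, with equality if and only if all ratios k_p/n_p are equal. -/
/-!
Writing `x_p = n_p - k_p`, one has `n_p / x_p = 1 + k_p / x_p`, so
`R_B⁻¹ = 1 + (∑ k_p² / x_p) / k`, while the inverse capacity is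
`n / (n - k) = 1 + (k² / ∑ x_p) / k`. The theorem is therefore Sedrakyan's inequality
`(∑ k_p)² / ∑ x_p ≤ ∑ k_p² / x_p`, whose equality case (all `k_p / x_p` equal, i.e. all
`k_p / n_p` equal) comes from the sum-of-squares identity
`∑ f²/g - (∑ f)²/∑ g = ∑ (f - c g)²/g` with `c = ∑ f / ∑ g`.
-/

open Finset

namespace Finset

variable {ι R : Type*} {s : Finset ι} {f g : ι → R}

theorem sum_sq_div_sub_sq_sum_div [Field R] (hg : ∀ i ∈ s, g i ≠ 0)
    (hG : ∑ i ∈ s, g i ≠ 0) :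
    ∑ i ∈ s, f i ^ 2 / g i - (∑ i ∈ s, f i) ^ 2 / ∑ i ∈ s, g i =
      ∑ i ∈ s, (f i - (∑ j ∈ s, f j) / (∑ j ∈ s, g j) * g i) ^ 2 / g i := by
  set c := (∑ j ∈ s, f j) / ∑ j ∈ s, g j
  have hterm : ∀ i ∈ s,
      (f i - c * g i) ^ 2 / g i = f i ^ 2 / g i - 2 * c * f i + c ^ 2 * g i := by
    intro i hi
    field_simp [hg i hi]
    ring
  rw [sum_congr rfl hterm, sum_add_distrib, sum_sub_distrib, ← mul_sum, ← mul_sum]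
  simp only [c]
  field_simp
  ring

variable [Field R] [LinearOrder R] [IsStrictOrderedRing R]

theorem forall_div_eq_div_iff_forall_eq_sum_div_mul (hg : ∀ i ∈ s, 0 < g i) (hs : s.Nonempty) :
    (∀ i ∈ s, ∀ j ∈ s, f i / g i = f j / g j) ↔
      ∀ i ∈ s, f i = (∑ j ∈ s, f j) / (∑ j ∈ s, g j) * g i := by
  constructor
  · intro h i hi
    have hG : 0 < ∑ j ∈ s, g j := sum_pos hg hs
    have hcross : f i * ∑ j ∈ s, g j = g i * ∑ j ∈ s, f j := by
      rw [mul_sum, mul_sum]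
      refine sum_congr rfl fun j hj => ?_
      have := h i hi j hj
      rw [div_eq_div_iff (hg i hi).ne' (hg j hj).ne'] at this
      linear_combination this
    field_simp
    linear_combination hcross
  · intro h i hi j hj
    rw [h i hi, h j hj, mul_div_cancel_right₀ _ (hg i hi).ne',
      mul_div_cancel_right₀ _ (hg j hj).ne']

theorem sq_sum_div_eq_sum_sq_div_iff (hg : ∀ i ∈ s, 0 < g i) :
    (∑ i ∈ s, f i) ^ 2 / ∑ i ∈ s, g i = ∑ i ∈ s, f i ^ 2 / g i ↔
      ∀ i ∈ s, ∀ j ∈ s, f i / g i = f j / g j := by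
  rcases s.eq_empty_or_nonempty with rfl | hs
  · simp
  have hG : 0 < ∑ j ∈ s, g j := sum_pos hg hs
  rw [forall_div_eq_div_iff_forall_eq_sum_div_mul hg hs, eq_comm, ← sub_eq_zero,
    sum_sq_div_sub_sq_sum_div (fun i hi => (hg i hi).ne') hG.ne',
    sum_eq_zero_iff_of_nonneg fun i hi => div_nonneg (sq_nonneg _) (hg i hi).le]
  refine forall₂_congr fun i hi => ?_
  rw [div_eq_zero_iff, or_iff_left (hg i hi).ne', sq_eq_zero_iff, sub_eq_zero]

end Finset

theorem div_sub_eq_div_sub_iff {R : Type*} [Field R] [LinearOrder R] [IsStrictOrderedRing R]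
    {a b c d : R} (ha : 0 ≤ a) (hab : a < b) (hc : 0 ≤ c) (hcd : c < d) :
    a / (b - a) = c / (d - c) ↔ a / b = c / d := by
  rw [div_eq_div_iff (sub_pos.2 hab).ne' (sub_pos.2 hcd).ne',
    div_eq_div_iff (ha.trans_lt hab).ne' (hc.trans_lt hcd).ne']
  constructor <;> intro h <;> linear_combination h

section ProtocolB

variable {ι : Type*} {s : Finset ι} {k n : ι → ℝ}

noncomputable def protocolBRate (s : Finset ι) (k n : ι → ℝ) : ℝ :=
  (∑ i ∈ s, (k i / ∑ j ∈ s, k j) * (n i / (n i - k i)))⁻¹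

theorem sum_div_mul_div_sub_eq_one_add (hk : ∀ i ∈ s, 0 < k i) (hkn : ∀ i ∈ s, k i < n i)
    (hs : s.Nonempty) :
    ∑ i ∈ s, (k i / ∑ j ∈ s, k j) * (n i / (n i - k i)) =
      1 + (∑ i ∈ s, k i ^ 2 / (n i - k i)) / ∑ j ∈ s, k j := by
  have hK : 0 < ∑ j ∈ s, k j := sum_pos hk hs
  have hterm : ∀ i ∈ s, (k i / ∑ j ∈ s, k j) * (n i / (n i - k i)) =
      k i / ∑ j ∈ s, k j + k i ^ 2 / (n i - k i) / ∑ j ∈ s, k j := by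
    intro i hi
    have : n i - k i ≠ 0 := (sub_pos.2 (hkn i hi)).ne'
    field_simp
    ring
  rw [sum_congr rfl hterm, sum_add_distrib, ← sum_div, ← sum_div, div_self hK.ne']

variable (hk : ∀ i ∈ s, 0 < k i) (hkn : ∀ i ∈ s, k i < n i) (hs : s.Nonempty)
include hk hkn hs

theorem inv_protocolBRate :
    (protocolBRate s k n)⁻¹ = 1 + (∑ i ∈ s, k i ^ 2 / (n i - k i)) / ∑ j ∈ s, k j := by
  rw [protocolBRate, inv_inv, sum_div_mul_div_sub_eq_one_add hk hkn hs]

theorem inv_sum_sub_sum_div_sum_eq_one_add :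
    ((∑ i ∈ s, n i - ∑ i ∈ s, k i) / ∑ i ∈ s, n i)⁻¹ =
      1 + ((∑ i ∈ s, k i) ^ 2 / ∑ i ∈ s, (n i - k i)) / ∑ j ∈ s, k j := by
  have hK : 0 < ∑ i ∈ s, k i := sum_pos hk hs
  have hNK : 0 < ∑ i ∈ s, (n i - k i) := sum_pos (fun i hi => sub_pos.2 (hkn i hi)) hs
  rw [sum_sub_distrib] at hNK ⊢
  field_simp
  ring

theorem protocolBRate_pos : 0 < protocolBRate s k n := by
  rw [← inv_pos, inv_protocolBRate hk hkn hs]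
  have hK : 0 < ∑ i ∈ s, k i := sum_pos hk hs
  have hsq : 0 ≤ ∑ i ∈ s, k i ^ 2 / (n i - k i) :=
    sum_nonneg fun i hi => div_nonneg (sq_nonneg _) (sub_pos.2 (hkn i hi)).le
  positivity

theorem sum_sub_sum_div_sum_pos : 0 < (∑ i ∈ s, n i - ∑ i ∈ s, k i) / ∑ i ∈ s, n i := by
  have hNK : 0 < ∑ i ∈ s, (n i - k i) := sum_pos (fun i hi => sub_pos.2 (hkn i hi)) hs
  have hN : 0 < ∑ i ∈ s, n i := sum_pos (fun i hi => (hk i hi).trans (hkn i hi)) hs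
  rw [sum_sub_distrib] at hNK
  positivity

theorem protocolBRate_le :
    protocolBRate s k n ≤ (∑ i ∈ s, n i - ∑ i ∈ s, k i) / ∑ i ∈ s, n i := by
  rw [← inv_le_inv₀ (sum_sub_sum_div_sum_pos hk hkn hs) (protocolBRate_pos hk hkn hs),
    inv_protocolBRate hk hkn hs, inv_sum_sub_sum_div_sum_eq_one_add hk hkn hs]
  gcongr
  · exact (sum_pos hk hs).le
  · exact sq_sum_div_le_sum_sq_div s k fun i hi => sub_pos.2 (hkn i hi)

theorem protocolBRate_eq_iff :
    protocolBRate s k n = (∑ i ∈ s, n i - ∑ i ∈ s, k i) / ∑ i ∈ s, n i ↔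
      ∀ i ∈ s, ∀ j ∈ s, k i / n i = k j / n j := by
  rw [← inv_inj, inv_protocolBRate hk hkn hs, inv_sum_sub_sum_div_sum_eq_one_add hk hkn hs,
    add_right_inj, div_left_inj' (sum_pos hk hs).ne', eq_comm,
    sq_sum_div_eq_sum_sq_div_iff fun i hi => sub_pos.2 (hkn i hi)]
  exact forall₂_congr fun i hi => forall₂_congr fun j hj =>
    div_sub_eq_div_sub_iff (hk i hi).le (hkn i hi) (hk j hj).le (hkn j hj)

end ProtocolB

/-- The asymptotic Protocol-B rate for a direct sum is at most the asymptotic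
MDS-PIR capacity `(n-k)/n`, with equality iff all component ratios `k_p/n_p` are equal. -/
theorem protocolB_rate_le_capacity (P : ℕ) (hP : 1 ≤ P)
    (np kp : Fin P → ℕ) (hk : ∀ p, 1 ≤ kp p) (hn : ∀ p, kp p < np p)
    (k n : ℕ) (hksum : k = ∑ p, kp p) (hnsum : n = ∑ p, np p) :
    ((∑ p, ((kp p : ℝ) / k) * ((np p : ℝ) / ((np p : ℝ) - kp p)))⁻¹ ≤
      ((n : ℝ) - k) / n) ∧
    ((∑ p, ((kp p : ℝ) / k) * ((np p : ℝ) / ((np p : ℝ) - kp p)))⁻¹ =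
      ((n : ℝ) - k) / n ↔ ∀ p q, (kp p : ℝ) / np p = (kp q : ℝ) / np q) := by
  subst hksum hnsum
  have hPne : (univ : Finset (Fin P)).Nonempty := univ_nonempty_iff.2 ⟨⟨0, hP⟩⟩
  have hkpos : ∀ p ∈ univ, (0 : ℝ) < kp p := fun p _ => by exact_mod_cast hk p
  have hkn : ∀ p ∈ univ, (kp p : ℝ) < np p := fun p _ => by exact_mod_cast hn p
  push_cast
  exact ⟨protocolBRate_le hkpos hkn hPne,
    (protocolBRate_eq_iff hkpos hkn hPne).trans (by simp)⟩
end

section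
/- The [9,5] binary code C generated by G = [[1,0,0,0,0,0,0,0,1],[0,1,0,0,0,0,0,0,1],[0,0,1,0,0,0,1,1,0],[0,0,0,1,0,1,0,1,1],[0,0,0,0,1,1,1,1,1]] has second generalized Hamming weight d_2 = 3; in particular d_2 < (9/5)·2, so C violates the necessary condition for MDS-PIR capacity-achieving codes. -/
open Matrix

private def Hchk : Matrix (Fin 4) (Fin 9) (ZMod 2) :=
  ![![0, 0, 0, 1, 1, 1, 0, 0, 0],
    ![0, 0, 1, 0, 1, 0, 1, 0, 0],
    ![0, 0, 1, 1, 1, 0, 0, 1, 0],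
    ![1, 1, 0, 1, 1, 0, 0, 0, 1]]

/-- The `[9,5]` binary code of Example 3 has second generalized Hamming weight
`d_2 = 3`, which violates the necessary condition `d_2 ≥ (9/5)·2` for MDS-PIR
capacity-achieving codes. -/
theorem ghw2_n9k5_code :
    let G : Fin 5 → Fin 9 → ZMod 2 :=
      ![![1, 0, 0, 0, 0, 0, 0, 0, 1],
        ![0, 1, 0, 0, 0, 0, 0, 0, 1],
        ![0, 0, 1, 0, 0, 0, 1, 1, 0],
        ![0, 0, 0, 1, 0, 1, 0, 1, 1],
        ![0, 0, 0, 0, 1, 1, 1, 1, 1]]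
    let C : Submodule (ZMod 2) (Fin 9 → ZMod 2) := Submodule.span (ZMod 2) (Set.range G)
    IsLeast {m : ℕ | ∃ D : Submodule (ZMod 2) (Fin 9 → ZMod 2),
      D ≤ C ∧ Module.finrank (ZMod 2) D = 2 ∧
      {i : Fin 9 | ∃ x ∈ D, x i ≠ 0}.ncard = m} 3 ∧
    (3 : ℝ) < (9 / 5) * 2 := by
  intro G C
  have hCker : C ≤ LinearMap.ker Hchk.mulVecLin := by
    rw [Submodule.span_le]
    rintro _ ⟨j, rfl⟩
    have : ∀ j : Fin 5, Hchk.mulVec (G j) = 0 := by decide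
    exact this j
  have hsingle : ∀ a : Fin 9, Hchk.mulVec (Pi.single a 1) ≠ 0 := by decide
  refine ⟨⟨?_, ?_⟩, by norm_num⟩
  · -- 3 is attained
    set u : Fin 9 → ZMod 2 := G 0 with hu
    set v : Fin 9 → ZMod 2 := G 1 with hv
    refine ⟨Submodule.span (ZMod 2) {u, v}, ?_, ?_, ?_⟩
    · exact Submodule.span_mono (by rintro x (rfl | rfl) <;> exact Set.mem_range_self _)
    · have hr : ({u, v} : Set (Fin 9 → ZMod 2)) = Set.range ![u, v] := by
        rw [Matrix.range_cons_cons_empty]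
      rw [hr, finrank_span_eq_card ?_]
      · rfl
      · rw [LinearIndependent.pair_iff]
        decide
    · have hset : {i : Fin 9 | ∃ x ∈ Submodule.span (ZMod 2) {u, v}, x i ≠ 0}
          = {0, 1, 8} := by
        ext i
        simp only [Set.mem_setOf_eq]
        constructor
        · rintro ⟨x, hx, hxi⟩
          obtain ⟨s, t, rfl⟩ := Submodule.mem_span_pair.mp hx
          clear hx
          simp only [Set.mem_insert_iff, Set.mem_singleton_iff]
          revert hxi; revert i s t
          decide
        · intro hi
          rcases hi with rfl | rfl | rfl
          · exact ⟨u, Submodule.subset_span (by left; rfl), by decide⟩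
          · exact ⟨v, Submodule.subset_span (by right; rfl), by decide⟩
          · exact ⟨u, Submodule.subset_span (by left; rfl), by decide⟩
      rw [hset, Set.ncard_insert_of_notMem (by simp) (Set.toFinite _),
        Set.ncard_insert_of_notMem (by simp) (Set.toFinite _), Set.ncard_singleton]
  · -- lower bound
    rintro m ⟨D, hDC, hDr, rfl⟩
    by_contra hlt
    push_neg at hlt
    set S := {i : Fin 9 | ∃ x ∈ D, x i ≠ 0} with hS
    have hS2 : S.ncard ≤ 2 := by omega
    obtain ⟨a, b, hab⟩ : ∃ a b : Fin 9, S ⊆ {a, b} := by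
      rcases S.eq_empty_or_nonempty with hE | ⟨a, ha⟩
      · exact ⟨0, 0, by simp [hE]⟩
      by_cases hb : ∃ c ∈ S, c ≠ a
      · obtain ⟨b, hbS, hba⟩ := hb
        refine ⟨a, b, fun c hc => ?_⟩
        by_contra hcn
        simp only [Set.mem_insert_iff, Set.mem_singleton_iff, not_or] at hcn
        have h3 : ({a, b, c} : Set (Fin 9)).ncard ≤ S.ncard :=
          Set.ncard_le_ncard (by
            intro z hz
            rcases hz with rfl | rfl | rfl
            · exact ha
            · exact hbS
            · exact hc) (Set.toFinite _)
        have hc3 : ({a, b, c} : Set (Fin 9)).ncard = 3 := by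
          rw [Set.ncard_insert_of_notMem (by simp [hba.symm, Ne.symm hcn.1]) (Set.toFinite _),
            Set.ncard_insert_of_notMem (by simp [Ne.symm hcn.2]) (Set.toFinite _),
            Set.ncard_singleton]
        omega
      · push_neg at hb
        exact ⟨a, a, fun c hc => by simp [hb c hc]⟩
    -- restriction map
    let ρ : D →ₗ[ZMod 2] ZMod 2 × ZMod 2 :=
      { toFun := fun x => ((x : Fin 9 → ZMod 2) a, (x : Fin 9 → ZMod 2) b)
        map_add' := fun x y => rfl
        map_smul' := fun c x => rfl }
    have hvanish : ∀ x : D, ∀ i : Fin 9, i ≠ a → i ≠ b → (x : Fin 9 → ZMod 2) i = 0 := by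
      intro x i hia hib
      by_contra hxi
      have hiS : i ∈ S := ⟨x, x.2, hxi⟩
      rcases hab hiS with h | h
      · exact hia h
      · exact hib h
    have hinj : Function.Injective ρ := by
      rw [← LinearMap.ker_eq_bot, LinearMap.ker_eq_bot']
      intro x hx
      have h1 : (x : Fin 9 → ZMod 2) a = 0 := congrArg Prod.fst hx
      have h2 : (x : Fin 9 → ZMod 2) b = 0 := congrArg Prod.snd hx
      ext i
      by_cases hia : i = a
      · subst hia; exact h1
      by_cases hib : i = b
      · subst hib; exact h2
      exact hvanish x i hia hib
    have hdim : Module.finrank (ZMod 2) D = Module.finrank (ZMod 2) (ZMod 2 × ZMod 2) := by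
      rw [hDr, Module.finrank_prod, Module.finrank_self]
    have hsurj : Function.Surjective ρ :=
      (LinearMap.injective_iff_surjective_of_finrank_eq_finrank hdim).mp hinj
    obtain ⟨x, hx⟩ := hsurj (1, 0)
    have hxa : (x : Fin 9 → ZMod 2) a = 1 := congrArg Prod.fst hx
    have hxb : (x : Fin 9 → ZMod 2) b = 0 := congrArg Prod.snd hx
    have hxs : (x : Fin 9 → ZMod 2) = Pi.single a 1 := by
      ext i
      rw [Pi.single_apply]
      by_cases hia : i = a
      · simp [hia, hxa]
      by_cases hib : i = b
      · subst hib; simp [hia, hxb]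
      · simp [hia, hvanish x i hia hib]
    have hmem : (x : Fin 9 → ZMod 2) ∈ C := hDC x.2
    have := hCker hmem
    rw [LinearMap.mem_ker, Matrix.mulVecLin_apply, hxs] at this
    exact hsingle a this
end

section
/- For the [7,4] binary code C_3 with generator matrix columns (in decimal, each column a 4-bit vector): 1, 2, 4, 8, 8, 14, 5, the third generalized Hamming weight satisfies d_3 = 5 < (7/4)·3, hence C_3 does not satisfy the necessary condition for being MDS-PIR capacity-achieving. -/
private abbrev GmC3 : Fin 4 → Fin 7 → ZMod 2 :=
  ![![1, 0, 0, 0, 0, 0, 1],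
    ![0, 1, 0, 0, 0, 1, 0],
    ![0, 0, 1, 0, 0, 1, 1],
    ![0, 0, 0, 1, 1, 1, 0]]

set_option maxHeartbeats 4000000 in
set_option maxRecDepth 100000 in
private lemma ghw_key : ∀ T : Finset (Fin 7), T.card ≤ 4 →
    (Finset.univ.filter (fun x : Fin 7 → ZMod 2 =>
      (x 3 + x 4 = 0 ∧ x 0 + x 2 + x 6 = 0 ∧ x 1 + x 2 + x 3 + x 5 = 0) ∧
        ∀ i, i ∉ T → x i = 0)).card ≤ 4 := by decide

private lemma checks_of_mem {x : Fin 7 → ZMod 2}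
    (hx : x ∈ Submodule.span (ZMod 2) (Set.range GmC3)) :
    x 3 + x 4 = 0 ∧ x 0 + x 2 + x 6 = 0 ∧ x 1 + x 2 + x 3 + x 5 = 0 := by
  induction hx using Submodule.span_induction with
  | mem v hv =>
      obtain ⟨j, rfl⟩ := hv
      fin_cases j <;> exact ⟨by decide, by decide, by decide⟩
  | zero => exact ⟨by simp, by simp, by simp⟩
  | add x y hx hy ihx ihy =>
      obtain ⟨a1, a2, a3⟩ := ihx
      obtain ⟨b1, b2, b3⟩ := ihy
      refine ⟨?_, ?_, ?_⟩ <;> simp only [Pi.add_apply]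
      · linear_combination a1 + b1
      · linear_combination a2 + b2
      · linear_combination a3 + b3
  | smul a x hx ih =>
      obtain ⟨i1, i2, i3⟩ := ih
      refine ⟨?_, ?_, ?_⟩ <;> simp only [Pi.smul_apply, smul_eq_mul]
      · linear_combination a * i1
      · linear_combination a * i2
      · linear_combination a * i3

private lemma zero34_of_mem {x : Fin 7 → ZMod 2}
    (hx : x ∈ Submodule.span (ZMod 2) (Set.range ![GmC3 0, GmC3 1, GmC3 2])) :
    x 3 = 0 ∧ x 4 = 0 := by
  induction hx using Submodule.span_induction with
  | mem v hv =>
      obtain ⟨j, rfl⟩ := hv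
      fin_cases j <;> exact ⟨by decide, by decide⟩
  | zero => exact ⟨rfl, rfl⟩
  | add x y hx hy ihx ihy =>
      exact ⟨by simp [Pi.add_apply, ihx.1, ihy.1], by simp [Pi.add_apply, ihx.2, ihy.2]⟩
  | smul a x hx ih =>
      exact ⟨by simp [Pi.smul_apply, ih.1], by simp [Pi.smul_apply, ih.2]⟩

private lemma li3 : LinearIndependent (ZMod 2) ![GmC3 0, GmC3 1, GmC3 2] := by
  rw [Fintype.linearIndependent_iff]
  intro g h
  have h0 := congrFun h 0
  have h1 := congrFun h 1
  have h2 := congrFun h 2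
  simp [Fin.sum_univ_three, Matrix.vecHead, Matrix.vecTail] at h0 h1 h2
  intro i
  fin_cases i
  · exact h0
  · exact h1
  · exact h2

private lemma ghw_least :
    IsLeast {m : ℕ | ∃ D : Submodule (ZMod 2) (Fin 7 → ZMod 2),
      D ≤ Submodule.span (ZMod 2) (Set.range GmC3) ∧
      Module.finrank (ZMod 2) D = 3 ∧
      {i : Fin 7 | ∃ x ∈ D, x i ≠ 0}.ncard = m} 5 := by
  constructor
  · refine ⟨Submodule.span (ZMod 2) (Set.range ![GmC3 0, GmC3 1, GmC3 2]), ?_, ?_, ?_⟩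
    · apply Submodule.span_mono
      rintro _ ⟨j, rfl⟩
      fin_cases j
      · exact ⟨0, by simp⟩
      · exact ⟨1, by simp⟩
      · exact ⟨2, by simp⟩
    · rw [finrank_span_eq_card li3]
      simp
    · have hset : {i : Fin 7 | ∃ x ∈ Submodule.span (ZMod 2)
          (Set.range ![GmC3 0, GmC3 1, GmC3 2]), x i ≠ 0}
          = ↑({0, 1, 2, 5, 6} : Finset (Fin 7)) := by
        ext i
        constructor
        · rintro ⟨x, hx, hxi⟩
          obtain ⟨h3, h4⟩ := zero34_of_mem hx
          fin_cases i
          · decide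
          · decide
          · decide
          · exact absurd h3 hxi
          · exact absurd h4 hxi
          · decide
          · decide
        · intro hi
          rw [Finset.mem_coe] at hi
          simp only [Set.mem_setOf_eq]
          fin_cases hi
          · exact ⟨GmC3 0, Submodule.subset_span ⟨0, by simp⟩, by decide⟩
          · exact ⟨GmC3 1, Submodule.subset_span ⟨1, by simp⟩, by decide⟩
          · exact ⟨GmC3 2, Submodule.subset_span ⟨2, by simp⟩, by decide⟩
          · exact ⟨GmC3 1, Submodule.subset_span ⟨1, by simp⟩, by decide⟩
          · exact ⟨GmC3 2, Submodule.subset_span ⟨2, by simp⟩, by decide⟩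
      rw [hset, Set.ncard_coe_finset]
      decide
  · rintro m ⟨D, hDC, hfin, rfl⟩
    by_contra hlt
    push_neg at hlt
    set T : Set (Fin 7) := {i | ∃ x ∈ D, x i ≠ 0} with hT
    have hTfin : T.Finite := Set.toFinite T
    have hTcard : hTfin.toFinset.card ≤ 4 := by
      rw [← Set.ncard_eq_toFinset_card T hTfin]
      omega
    have hsub : (D : Set (Fin 7 → ZMod 2)) ⊆
        ↑(Finset.univ.filter (fun x : Fin 7 → ZMod 2 =>
          (x 3 + x 4 = 0 ∧ x 0 + x 2 + x 6 = 0 ∧ x 1 + x 2 + x 3 + x 5 = 0) ∧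
            ∀ i, i ∉ hTfin.toFinset → x i = 0)) := by
      intro x hx
      rw [Finset.mem_coe, Finset.mem_filter]
      refine ⟨Finset.mem_univ _, checks_of_mem (hDC hx), ?_⟩
      intro i hi
      by_contra hne
      exact hi (hTfin.mem_toFinset.mpr ⟨x, hx, hne⟩)
    have h1 : (D : Set (Fin 7 → ZMod 2)).ncard ≤ 4 := by
      refine le_trans (Set.ncard_le_ncard hsub (Finset.finite_toSet _)) ?_
      rw [Set.ncard_coe_finset]
      exact ghw_key _ hTcard
    haveI : Fintype D := Fintype.ofFinite _
    have h2 : (D : Set (Fin 7 → ZMod 2)).ncard = 8 := by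
      rw [← Nat.card_coe_set_eq]
      have heq : Nat.card (D : Set (Fin 7 → ZMod 2)) = Nat.card D := rfl
      rw [heq, Nat.card_eq_fintype_card]
      have hc := Module.card_eq_pow_finrank (K := ZMod 2) (V := D)
      rw [ZMod.card, hfin] at hc
      omega
    omega

/-- The `[7,4]` binary code `C_3` has third generalized Hamming weight `d_3 = 5`,
which violates the necessary condition `d_3 ≥ (7/4)·3` for MDS-PIR
capacity-achieving codes. -/
theorem ghw3_n7k4_code :
    let G : Fin 4 → Fin 7 → ZMod 2 :=
      ![![1, 0, 0, 0, 0, 0, 1],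
        ![0, 1, 0, 0, 0, 1, 0],
        ![0, 0, 1, 0, 0, 1, 1],
        ![0, 0, 0, 1, 1, 1, 0]]
    let C : Submodule (ZMod 2) (Fin 7 → ZMod 2) := Submodule.span (ZMod 2) (Set.range G)
    IsLeast {m : ℕ | ∃ D : Submodule (ZMod 2) (Fin 7 → ZMod 2),
      D ≤ C ∧ Module.finrank (ZMod 2) D = 3 ∧
      {i : Fin 7 | ∃ x ∈ D, x i ≠ 0}.ncard = m} 5 ∧
    (5 : ℝ) < (7 / 4) * 3 := by
  intro G C
  exact ⟨ghw_least, by norm_num⟩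
end
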